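/- Let p ≥ 2 be an integer, let x₁, …, x_p be distinct points in [−1,1] with weights w₁, …, w_p ∈ ℝ such that the quadrature rule Q̂_p(g) = Σ_{k=1}^{p} w_k·g(x_k) is exact of degree 2p − 2. Let f : ℝ → ℝ, let Π_{p−1}f = Σ_{l=0}^{p−1} b_l·L_l be the Legendre expansion of the unique polynomial of degree ≤ p − 1 interpolating f at x₁, …, x_p, and assume Σ_{k=1}^{p} w_k·f(x_k)·L_{p−2}(x_k) ≠ 0. Then (2p − 3)·|b_{p−1}|/|b_{p−2}| = (2p − 1)·|Σ_{k=1}^{p} w_k·f(x_k)·L_{p−1}(x_k)| / |Σ_{k=1}^{p} w_k·f(x_k)·L_{p−2}(x_k)|. -/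

import Mathlib

/-!
Write `W_n = (X² - 1)ⁿ`, so that `L_n` is a multiple of `W_n⁽ⁿ⁾`. Since `W_n⁽ᵏ⁾` vanishes at `±1`
for `k < n`, integrating by parts `n` times gives `∫ q W_n⁽ⁿ⁾ = (-1)ⁿ ∫ q⁽ⁿ⁾ W_n`, whence the
orthogonality of the `L_n` and `∫ L_n² = 2 / (2n + 1)`. As `P L_j` has degree at most `2p - 2` for
`j < p`, exactness of the quadrature turns `Σ_k w_k f(x_k) L_j(x_k)` into `∫ P L_j = 2 b_j / (2j + 1)`,
and the identity follows by comparing `j = p - 1` with `j = p - 2`.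
-/

open Polynomial

noncomputable def legendre (n : ℕ) : ℝ → ℝ :=
  fun x => (1 / ((2 : ℝ) ^ n * (n.factorial : ℝ))) *
    iteratedDeriv n (fun y => (y ^ 2 - 1) ^ n) x

lemma deriv_fun_eval (q : ℝ[X]) : deriv (fun y => q.eval y) = fun y => (derivative q).eval y :=
  _root_.funext fun _ => q.deriv

lemma iteratedDeriv_fun_eval (q : ℝ[X]) (k : ℕ) :
    iteratedDeriv k (fun y => q.eval y) = fun y => (derivative^[k] q).eval y := by
  induction k generalizing q with
  | zero => simp
  | succ k ih =>
    rw [iteratedDeriv_succ', Function.iterate_succ_apply, deriv_fun_eval]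
    exact ih _

noncomputable def integralPoly : ℝ[X] →ₗ[ℝ] ℝ where
  toFun q := ∫ t in (-1 : ℝ)..1, q.eval t
  map_add' q r := by
    simp only [eval_add]
    exact intervalIntegral.integral_add (q.continuous.intervalIntegrable _ _)
      (r.continuous.intervalIntegrable _ _)
  map_smul' a q := by
    simp only [eval_smul, smul_eq_mul, RingHom.id_apply]
    exact intervalIntegral.integral_const_mul a _

lemma integralPoly_apply (q : ℝ[X]) : integralPoly q = ∫ t in (-1 : ℝ)..1, q.eval t := rfl

lemma integralPoly_derivative (q : ℝ[X]) :
    integralPoly (derivative q) = q.eval 1 - q.eval (-1) :=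
  intervalIntegral.integral_deriv_eq_sub' _ (deriv_fun_eval q)
    (fun _ _ => q.differentiableAt) (derivative q).continuous.continuousOn

lemma integralPoly_mul_iterate_derivative {u v : ℝ[X]} {m : ℕ}
    (hv : ∀ k < m, (derivative^[k] v).eval 1 = 0 ∧ (derivative^[k] v).eval (-1) = 0) :
    integralPoly (u * derivative^[m] v) = (-1) ^ m * integralPoly (derivative^[m] u * v) := by
  induction m generalizing u with
  | zero => simp
  | succ m ih =>
    have hparts := integralPoly_derivative (u * derivative^[m] v)
    simp only [derivative_mul, map_add, eval_mul, (hv m m.lt_succ_self).1,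
      (hv m m.lt_succ_self).2, mul_zero, sub_zero] at hparts
    have hm := ih (u := derivative u) fun k hk => hv k (hk.trans m.lt_succ_self)
    rw [Function.iterate_succ_apply', Function.iterate_succ_apply, pow_succ]
    linear_combination hparts - hm

lemma eval_iterate_derivative_sq_sub_one_pow {n k : ℕ} (hk : k < n) {t : ℝ} (ht : t ^ 2 = 1) :
    (derivative^[k] ((X ^ 2 - 1 : ℝ[X]) ^ n)).eval t = 0 :=
  eval_eq_zero_of_dvd_of_eval_eq_zero (pow_sub_dvd_iterate_derivative_pow _ n k)
    (by simp [ht, Nat.sub_ne_zero_of_lt hk])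

lemma monic_sq_sub_one_pow {n : ℕ} : ((X ^ 2 - 1 : ℝ[X]) ^ n).Monic := by
  simpa using (monic_X_pow_sub_C (1 : ℝ) two_ne_zero).pow n

lemma natDegree_sq_sub_one_pow (n : ℕ) : ((X ^ 2 - 1 : ℝ[X]) ^ n).natDegree = 2 * n := by
  rw [natDegree_pow, show (X ^ 2 - 1 : ℝ[X]) = X ^ 2 - C 1 by simp, natDegree_X_pow_sub_C,
    mul_comm]

noncomputable def legendrePoly (n : ℕ) : ℝ[X] :=
  ((2 : ℝ) ^ n * n.factorial)⁻¹ • derivative^[n] ((X ^ 2 - 1) ^ n)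

lemma legendre_eq_eval (n : ℕ) (t : ℝ) : legendre n t = (legendrePoly n).eval t := by
  have hW : (fun y : ℝ => (y ^ 2 - 1) ^ n) = fun y => ((X ^ 2 - 1 : ℝ[X]) ^ n).eval y := by
    simp
  rw [legendre, hW, iteratedDeriv_fun_eval, legendrePoly, eval_smul, smul_eq_mul, one_div]

lemma natDegree_legendrePoly_le (n : ℕ) : (legendrePoly n).natDegree ≤ n := by
  refine (natDegree_smul_le (R := ℝ) _ _).trans ?_
  have := natDegree_iterate_derivative ((X ^ 2 - 1 : ℝ[X]) ^ n) n
  rw [natDegree_sq_sub_one_pow] at this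
  omega

lemma iterate_derivative_two_mul_sq_sub_one_pow (n : ℕ) :
    derivative^[2 * n] ((X ^ 2 - 1 : ℝ[X]) ^ n) = C ((2 * n).factorial : ℝ) := by
  have hdeg : (derivative^[2 * n] ((X ^ 2 - 1 : ℝ[X]) ^ n)).natDegree = 0 := by
    have := natDegree_iterate_derivative ((X ^ 2 - 1 : ℝ[X]) ^ n) (2 * n)
    rw [natDegree_sq_sub_one_pow] at this
    omega
  rw [eq_C_of_natDegree_eq_zero hdeg, coeff_iterate_derivative, zero_add,
    Nat.descFactorial_self, ← natDegree_sq_sub_one_pow, monic_sq_sub_one_pow.coeff_natDegree,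
    nsmul_one]

lemma integralPoly_mul_legendrePoly (n : ℕ) (q : ℝ[X]) :
    integralPoly (q * legendrePoly n) = ((2 : ℝ) ^ n * n.factorial)⁻¹ * (-1) ^ n *
      integralPoly (derivative^[n] q * (X ^ 2 - 1) ^ n) := by
  rw [legendrePoly, mul_smul_comm, map_smul, smul_eq_mul,
    integralPoly_mul_iterate_derivative fun k hk => ⟨?_, ?_⟩, mul_assoc] <;>
  exact eval_iterate_derivative_sq_sub_one_pow hk (by norm_num)

lemma integralPoly_mul_legendrePoly_of_natDegree_lt {n : ℕ} {q : ℝ[X]} (hq : q.natDegree < n) :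
    integralPoly (q * legendrePoly n) = 0 := by
  simp [integralPoly_mul_legendrePoly, iterate_derivative_eq_zero hq]

lemma integralPoly_legendrePoly_mul_legendrePoly_of_ne {m n : ℕ} (h : m ≠ n) :
    integralPoly (legendrePoly m * legendrePoly n) = 0 := by
  rcases h.lt_or_gt with hmn | hnm
  · exact integralPoly_mul_legendrePoly_of_natDegree_lt ((natDegree_legendrePoly_le m).trans_lt hmn)
  · rw [mul_comm]
    exact integralPoly_mul_legendrePoly_of_natDegree_lt ((natDegree_legendrePoly_le n).trans_lt hnm)

lemma integralPoly_sq_sub_one_pow_succ (n : ℕ) :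
    (2 * n + 3 : ℝ) * integralPoly ((X ^ 2 - 1) ^ (n + 1)) =
      -(2 * n + 2) * integralPoly ((X ^ 2 - 1) ^ n) := by
  have hderiv : derivative (X * (X ^ 2 - 1 : ℝ[X]) ^ (n + 1)) =
      (2 * n + 3 : ℝ) • (X ^ 2 - 1) ^ (n + 1) + (2 * n + 2 : ℝ) • (X ^ 2 - 1) ^ n := by
    simp only [derivative_mul, derivative_X, derivative_pow, derivative_sub, derivative_one,
      smul_eq_C_mul]
    push_cast
    simp only [map_add, map_mul, map_natCast, map_ofNat, C_1]
    ring
  have hboundary := integralPoly_derivative (X * (X ^ 2 - 1 : ℝ[X]) ^ (n + 1))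
  rw [hderiv, map_add, map_smul, map_smul] at hboundary
  norm_num at hboundary
  linear_combination hboundary

lemma factorial_mul_integralPoly_sq_sub_one_pow (n : ℕ) :
    ((2 * n + 1).factorial : ℝ) * integralPoly ((X ^ 2 - 1) ^ n) =
      (-1) ^ n * 2 ^ (2 * n + 1) * (n.factorial : ℝ) ^ 2 := by
  induction n with
  | zero => norm_num [integralPoly_apply]
  | succ n ih =>
    have hfac : ((2 * (n + 1) + 1).factorial : ℝ) =
        (2 * n + 3) * (2 * n + 2) * (2 * n + 1).factorial := by
      rw [show 2 * (n + 1) + 1 = 2 * n + 1 + 1 + 1 by ring, Nat.factorial_succ, Nat.factorial_succ]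
      push_cast
      ring
    rw [hfac, Nat.factorial_succ n]
    push_cast
    linear_combination (2 * n + 2 : ℝ) * (2 * n + 1).factorial * integralPoly_sq_sub_one_pow_succ n
      - (2 * n + 2 : ℝ) ^ 2 * ih

lemma integralPoly_legendrePoly_mul_self (n : ℕ) :
    integralPoly (legendrePoly n * legendrePoly n) = 2 / (2 * n + 1) := by
  have hderiv : derivative^[n] (legendrePoly n) =
      C (((2 : ℝ) ^ n * n.factorial)⁻¹ * (2 * n).factorial) := by
    rw [legendrePoly, iterate_derivative_smul, ← Function.iterate_add_apply, ← two_mul,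
      iterate_derivative_two_mul_sq_sub_one_pow, smul_C, smul_eq_mul]
  have hfac : ((2 * n + 1).factorial : ℝ) = (2 * n + 1) * (2 * n).factorial := by
    push_cast [Nat.factorial_succ]
    ring
  have hW := factorial_mul_integralPoly_sq_sub_one_pow n
  rw [integralPoly_mul_legendrePoly, hderiv, ← smul_eq_C_mul, map_smul, smul_eq_mul]
  rw [hfac] at hW
  have hsign : ((-1 : ℝ) ^ n) * (-1) ^ n = 1 := by rw [← mul_pow]; norm_num
  have h2n : (2 * n + 1 : ℝ) ≠ 0 := by positivity
  field_simp
  linear_combination (-1 : ℝ) ^ n * hW + 2 ^ (2 * n + 1) * (n.factorial : ℝ) ^ 2 * hsign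

lemma integralPoly_sum_smul_legendrePoly_mul {p j : ℕ} (b : ℕ → ℝ) (hj : j < p) :
    integralPoly ((∑ l ∈ Finset.range p, b l • legendrePoly l) * legendrePoly j) =
      2 * b j / (2 * j + 1) := by
  rw [Finset.sum_mul, map_sum, Finset.sum_eq_single_of_mem j (Finset.mem_range.mpr hj)]
  · rw [smul_mul_assoc, map_smul, integralPoly_legendrePoly_mul_self, smul_eq_mul, mul_div_assoc']
    ring
  · intro l _ hlj
    rw [smul_mul_assoc, map_smul, integralPoly_legendrePoly_mul_legendrePoly_of_ne hlj, smul_zero]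

lemma sum_weight_mul_legendre_eq {p j : ℕ} (hj : j < p) (x w : Fin p → ℝ)
    (hexact : ∀ q : ℝ[X], q.natDegree ≤ 2 * p - 2 → ∑ k, w k * q.eval (x k) = integralPoly q)
    (f : ℝ → ℝ) (b : ℕ → ℝ) (hPinterp : ∀ k,
      (∑ l ∈ Finset.range p, b l • legendrePoly l).eval (x k) = f (x k)) :
    ∑ k, w k * f (x k) * legendre j (x k) = 2 * b j / (2 * j + 1) := by
  set P := ∑ l ∈ Finset.range p, b l • legendrePoly l
  have hPdeg : P.natDegree ≤ p - 1 :=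
    natDegree_sum_le_of_forall_le _ _ fun l hl =>
      (natDegree_smul_le _ _).trans ((natDegree_legendrePoly_le l).trans
        (by have := Finset.mem_range.mp hl; omega))
  have hdeg : (P * legendrePoly j).natDegree ≤ 2 * p - 2 :=
    natDegree_mul_le.trans (by have := natDegree_legendrePoly_le j; omega)
  rw [← integralPoly_sum_smul_legendrePoly_mul b hj, ← hexact _ hdeg]
  simp [← hPinterp, legendre_eq_eval, mul_assoc]

theorem statement11_general (p : ℕ) (hp : 2 ≤ p) (x w : Fin p → ℝ)
    (hexact : ∀ q : Polynomial ℝ, q.natDegree ≤ 2 * p - 2 →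
      ∑ k, w k * q.eval (x k) = ∫ t in (-1 : ℝ)..1, q.eval t)
    (f : ℝ → ℝ) (P : Polynomial ℝ)
    (hPinterp : ∀ k, P.eval (x k) = f (x k))
    (b : ℕ → ℝ) (hb : ∀ y : ℝ, P.eval y = ∑ l ∈ Finset.range p, b l * legendre l y)
    (hden : ∑ k, w k * f (x k) * legendre (p - 2) (x k) ≠ 0) :
    (2 * (p : ℝ) - 3) * |b (p - 1)| / |b (p - 2)| =
      (2 * (p : ℝ) - 1) * |∑ k, w k * f (x k) * legendre (p - 1) (x k)| /
        |∑ k, w k * f (x k) * legendre (p - 2) (x k)| := by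
  have hP : P = ∑ l ∈ Finset.range p, b l • legendrePoly l :=
    Polynomial.funext fun y => by simp [hb, eval_finsetSum, legendre_eq_eval]
  have hS (j : ℕ) (hj : j < p) := sum_weight_mul_legendre_eq hj x w hexact f b (hP ▸ hPinterp)
  obtain ⟨q, rfl⟩ : ∃ q, p = q + 2 := ⟨p - 2, by omega⟩
  simp only [Nat.add_sub_cancel, show q + 2 - 1 = q + 1 from rfl, hS q (by omega),
    hS (q + 1) (by omega)] at hden ⊢
  have hbq : b q ≠ 0 := by rintro h; simp [h] at hden
  push_cast
  rw [abs_div, abs_div, abs_mul, abs_mul, abs_of_pos (by positivity : (0 : ℝ) < 2 * (q + 1) + 1),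
    abs_of_pos (by positivity : (0 : ℝ) < 2 * q + 1)]
  field_simp
  ring

/-- Under the hypotheses of Statement 10, and assuming
`Σ_k w_k f(x_k) L_{p-2}(x_k) ≠ 0`, one has
`(2p - 3)|b_{p-1}|/|b_{p-2}| = (2p - 1)|Σ_k w_k f(x_k) L_{p-1}(x_k)| / |Σ_k w_k f(x_k) L_{p-2}(x_k)|`. -/
theorem statement11 (p : ℕ) (hp : 2 ≤ p) (x w : Fin p → ℝ)
    (hxmem : ∀ k, x k ∈ Set.Icc (-1 : ℝ) 1) (hxinj : Function.Injective x)
    (hexact : ∀ q : Polynomial ℝ, q.natDegree ≤ 2 * p - 2 →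
      ∑ k, w k * q.eval (x k) = ∫ t in (-1 : ℝ)..1, q.eval t)
    (f : ℝ → ℝ) (P : Polynomial ℝ) (hPdeg : P.natDegree ≤ p - 1)
    (hPinterp : ∀ k, P.eval (x k) = f (x k))
    (b : ℕ → ℝ) (hb : ∀ y : ℝ, P.eval y = ∑ l ∈ Finset.range p, b l * legendre l y)
    (hden : ∑ k, w k * f (x k) * legendre (p - 2) (x k) ≠ 0) :
    (2 * (p : ℝ) - 3) * |b (p - 1)| / |b (p - 2)| =
      (2 * (p : ℝ) - 1) * |∑ k, w k * f (x k) * legendre (p - 1) (x k)| /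
        |∑ k, w k * f (x k) * legendre (p - 2) (x k)| :=
  statement11_general p hp x w hexact f P hPinterp b hb hden
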